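/- Let Υ > 0 and let (r_n) be a sequence of measurable maps r_n : [0,T] → V with sup_n sup_{s∈[0,T]} ‖r_n(s)‖_H < ∞. Then sup_{(f,g) ∈ S̄^Υ} sup_n [ ∫₀^T ‖∫_Z γ(s,r_n(s),z)(g(s,z) − 1) ν(dz)‖_H ds + ∫₀^T ‖B(s,r_n(s))f(s)‖_H ds ] < ∞. -/

import Mathlib

/-!
The control term is handled pointwise by `‖B f‖ ≤ (‖B‖² + ‖f‖²) / 2` with `‖B‖² ≤ (1 + M²) b`,
where `M` bounds `‖r_n‖_H`. The jump term is at most `(1 + M) ∫ L_γ |g - 1| dν_T`, and the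
elementary inequality `a |x - 1| ≤ C_δ (exp (δ a²) - 1 + ℓ x)` splits this into an exponential
moment of `L_γ`, finite for small `δ` because `L_γ ∈ L² ∩ 𝓗₂`, and the entropy of `g`, which is
at most `Υ`.
-/

open MeasureTheory Filter Topology
open scoped ENNReal

/-- The measure `λ_T ⊗ ν` on `Z_T = [0,T] × Z`. -/
noncomputable def nuT {Z : Type*} [MeasurableSpace Z] (T : ℝ) (ν : Measure Z) :
    Measure (ℝ × Z) := (volume.restrict (Set.Icc 0 T)).prod ν

/-- The set `S^Υ` of nonnegative measurable functions `g` on `(Z_T, ν_T)` with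
`∫ ℓ(g) dν_T ≤ Υ`, where `ℓ(r) = r log r − r + 1`. -/
def entS {X : Type*} [MeasurableSpace X] (μ : Measure X) (Υ : ℝ) : Set (X → ℝ) :=
  {g | Measurable g ∧ (∀ x, 0 ≤ g x) ∧
    ∫⁻ x, ENNReal.ofReal (g x * Real.log (g x) - g x + 1) ∂μ ≤ ENNReal.ofReal Υ}

/-- The class `𝓗_p` on `(Z_T, ν_T)`. -/
def memHp {X : Type*} [MeasurableSpace X] (μ : Measure X) (p : ℝ) (h : X → ℝ) : Prop :=
  Measurable h ∧ (∀ x, 0 ≤ h x) ∧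
    ∃ δ > (0:ℝ), ∀ E : Set X, MeasurableSet E → μ E < ∞ →
      ∫⁻ x in E, ENNReal.ofReal (Real.exp (δ * h x ^ p)) ∂μ < ∞

namespace Real

/-- The `ℓ` of the paper, the Legendre dual of `a ↦ exp a - 1`. -/
noncomputable def ell (x : ℝ) : ℝ := x * log x - x + 1

lemma sq_sqrt_sub_one_le_ell {x : ℝ} (hx : 0 ≤ x) : (√x - 1) ^ 2 ≤ ell x := by
  obtain rfl | hx := hx.eq_or_lt
  · simp [ell]
  set y := √x
  have hy : 0 < y := sqrt_pos.2 hx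
  have hxy : x = y ^ 2 := (sq_sqrt hx.le).symm
  have hlog : log x = 2 * log y := by rw [hxy, log_pow]; norm_num
  have h := mul_le_mul_of_nonneg_left (one_sub_inv_le_log_of_pos hy) (sq_nonneg y)
  have hyy : y ^ 2 * (1 - y⁻¹) = y ^ 2 - y := by field_simp
  rw [ell, hlog, hxy]
  nlinarith

lemma ell_nonneg {x : ℝ} (hx : 0 ≤ x) : 0 ≤ ell x :=
  (sq_nonneg _).trans (sq_sqrt_sub_one_le_ell hx)

lemma sq_sub_one_le_six_mul_ell {x : ℝ} (hx : 0 ≤ x) (hx2 : x ≤ 2) : (x - 1) ^ 2 ≤ 6 * ell x := by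
  have hs : √x ≤ 1.44 := (sqrt_le_left (by norm_num)).2 (by norm_num; linarith)
  have hfac : x - 1 = (√x - 1) * (√x + 1) := by
    ring_nf
    rw [sq_sqrt hx]
  rw [hfac, mul_pow]
  have h6 : (√x + 1) ^ 2 ≤ 6 := by nlinarith [sqrt_nonneg x]
  nlinarith [sq_sqrt_sub_one_le_ell hx, sq_nonneg (√x - 1)]

lemma one_le_six_mul_ell {x : ℝ} (hx : 2 ≤ x) : 1 ≤ 6 * ell x := by
  have hs : 1.41 ≤ √x := (le_sqrt (by norm_num) (by linarith)).2 (by norm_num; linarith)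
  nlinarith [sq_sqrt_sub_one_le_ell (x := x) (by linarith)]

lemma mul_le_exp_sub_one_add_ell (a : ℝ) {x : ℝ} (hx : 0 ≤ x) : a * x ≤ exp a - 1 + ell x := by
  obtain rfl | hx := hx.eq_or_lt
  · simp [ell, (exp_pos a).le]
  have h := mul_le_mul_of_nonneg_left (add_one_le_exp (a - log x)) hx.le
  have hexp : x * exp (a - log x) = exp a := by rw [exp_sub, exp_log hx]; field_simp
  rw [ell]
  nlinarith

lemma exp_sub_one_le_mul_exp (u : ℝ) : exp u - 1 ≤ u * exp u := by
  have h := mul_le_mul_of_nonneg_right (one_sub_le_exp_neg u) (exp_pos u).le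
  rw [← exp_add, neg_add_cancel, exp_zero] at h
  linarith

lemma exp_le_exp_mul_exp_mul_sq {δ : ℝ} (hδ : 0 < δ) (a : ℝ) :
    exp a ≤ exp (1 / (4 * δ)) * exp (δ * a ^ 2) := by
  rw [← exp_add, exp_le_exp, div_add' _ _ _ (by positivity), le_div_iff₀ (by positivity)]
  nlinarith [sq_nonneg (2 * δ * a - 1)]

/-- For `x ≤ 2` this is `2 a |x - 1| ≤ a² + (x - 1)²`; for `x > 2` it is Young's inequality
`a x ≤ exp a - 1 + ℓ x` with `exp a ≤ exp (1 / (4 δ)) exp (δ a²)`, the additive constants being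
absorbed by `ℓ x ≥ 1 / 6`. -/
lemma mul_abs_sub_one_le {δ a x : ℝ} (hδ : 0 < δ) (ha : 0 ≤ a) (hx : 0 ≤ x) :
    a * |x - 1| ≤ (1 / (2 * δ) + 6 * exp (1 / (4 * δ))) * (exp (δ * a ^ 2) - 1 + ell x) := by
  have hD : 0 ≤ 1 / (2 * δ) := by positivity
  have hc : 1 ≤ exp (1 / (4 * δ)) := one_le_exp (by positivity)
  have hE : δ * a ^ 2 ≤ exp (δ * a ^ 2) - 1 := by linarith [add_one_le_exp (δ * a ^ 2)]
  have hE0 : 0 ≤ exp (δ * a ^ 2) - 1 := (by positivity : 0 ≤ δ * a ^ 2).trans hE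
  have hℓ := ell_nonneg hx
  rcases le_or_gt x 2 with hx2 | hx2
  · have hamgm : 2 * (a * |x - 1|) ≤ a ^ 2 + (x - 1) ^ 2 := by
      have h := two_mul_le_add_sq a |x - 1|
      rw [sq_abs] at h
      linarith
    have ha2 : a ^ 2 ≤ 2 * (1 / (2 * δ)) * (exp (δ * a ^ 2) - 1) := by
      rw [show 2 * (1 / (2 * δ)) = 1 / δ by field_simp, one_div_mul_eq_div, le_div_iff₀ hδ]
      linarith
    nlinarith [sq_sub_one_le_six_mul_ell hx hx2, mul_nonneg hD hℓ]
  · have hYoung := mul_le_exp_sub_one_add_ell a hx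
    have hexp := exp_le_exp_mul_exp_mul_sq hδ a
    have hℓ1 := one_le_six_mul_ell hx2.le
    rw [abs_of_nonneg (by linarith)]
    nlinarith [mul_nonneg hD hℓ, mul_nonneg hD hE0, mul_nonneg (sub_nonneg.2 hc) (sub_nonneg.2 hℓ1)]

end Real

open Real

section Integrals

variable {S X Z E : Type*} [MeasurableSpace S] [MeasurableSpace X] [MeasurableSpace Z]
  [NormedAddCommGroup E] [NormedSpace ℝ E]

lemma integral_norm_integral_le_of_lintegral_le {μ : Measure S} {ν : Measure Z} [SFinite ν]
    {Φ : S × Z → E} {F : S × Z → ℝ≥0∞} {A : ℝ≥0∞} (hF : Measurable F)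
    (hΦ : ∀ᵐ s ∂μ, ∀ z, ‖Φ (s, z)‖ₑ ≤ F (s, z)) (hFA : ∫⁻ q, F q ∂μ.prod ν ≤ A) (hA : A ≠ ∞) :
    ∫ s, ‖∫ z, Φ (s, z) ∂ν‖ ∂μ ≤ A.toReal := by
  have h := norm_integral_le_lintegral_norm (μ := μ) fun s => ‖∫ z, Φ (s, z) ∂ν‖
  simp only [norm_norm] at h
  refine (Real.le_norm_self _).trans (h.trans (ENNReal.toReal_mono hA ?_))
  calc ∫⁻ s, ENNReal.ofReal ‖∫ z, Φ (s, z) ∂ν‖ ∂μ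
      ≤ ∫⁻ s, ∫⁻ z, F (s, z) ∂ν ∂μ := by
        refine lintegral_mono_ae (hΦ.mono fun s hs => ?_)
        rw [ofReal_norm]
        exact (enorm_integral_le_lintegral_enorm _).trans (lintegral_mono hs)
    _ = ∫⁻ q, F q ∂μ.prod ν := (lintegral_prod F hF.aemeasurable).symm
    _ ≤ A := hFA

lemma integral_norm_apply_le {F : Type*} [NormedAddCommGroup F] [NormedSpace ℝ F]
    {μ : Measure S} {A : S → E →L[ℝ] F} {f : S → E} {β : S → ℝ}
    (hβ : Integrable β μ) (hf : MemLp f 2 μ) (hA : ∀ᵐ s ∂μ, ‖A s‖ ^ 2 ≤ β s) :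
    ∫ s, ‖A s (f s)‖ ∂μ ≤ (∫ s, β s ∂μ + ∫ s, ‖f s‖ ^ 2 ∂μ) / 2 := by
  have hf2 : Integrable (fun s => ‖f s‖ ^ 2) μ := hf.integrable_norm_pow two_ne_zero
  rw [← integral_add hβ hf2, ← integral_div]
  refine integral_mono_of_nonneg (.of_forall fun s => norm_nonneg _) ((hβ.add hf2).div_const 2)
    (hA.mono fun s hs => ?_)
  have := two_mul_le_add_sq ‖A s‖ ‖f s‖
  have := (A s).le_opNorm (f s)
  nlinarith [norm_nonneg (f s)]

/-- `{h ≥ 1}` has finite measure by Markov's inequality, so `𝓗₂` controls the integral there;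
on `{h < 1}` we have `exp (δ h²) - 1 ≤ δ exp δ h²`. -/
lemma exists_lintegral_exp_mul_sq_sub_one_lt_top {μ : Measure X} {h : X → ℝ}
    (hH : memHp μ 2 h) (h2 : ∫⁻ x, ENNReal.ofReal (h x ^ 2) ∂μ < ∞) :
    ∃ δ > 0, ∫⁻ x, ENNReal.ofReal (exp (δ * h x ^ 2) - 1) ∂μ < ∞ := by
  obtain ⟨hm, h0, δ, hδ, hexp⟩ := hH
  refine ⟨δ, hδ, ?_⟩
  set U := {x | 1 ≤ h x}
  have hUm : MeasurableSet U := measurableSet_le measurable_const hm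
  have hU : μ U < ∞ := by
    refine lt_of_le_of_lt (measure_mono fun x (hx : 1 ≤ h x) => ?_)
      ((meas_ge_le_lintegral_div (hm.pow_const 2).ennreal_ofReal.aemeasurable one_ne_zero
        ENNReal.one_ne_top).trans_lt ?_)
    · show 1 ≤ ENNReal.ofReal (h x ^ 2)
      rw [ENNReal.one_le_ofReal]
      nlinarith
    · rwa [div_one]
  have hexpU := hexp U hUm hU
  simp only [Real.rpow_two] at hexpU
  have hpt : ∀ x, ENNReal.ofReal (exp (δ * h x ^ 2) - 1)
      ≤ U.indicator (fun x => ENNReal.ofReal (exp (δ * h x ^ 2))) x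
        + ENNReal.ofReal (δ * exp δ) * ENNReal.ofReal (h x ^ 2) := by
    intro x
    by_cases hx : x ∈ U
    · rw [Set.indicator_of_mem hx]
      exact le_add_right (ENNReal.ofReal_le_ofReal (by linarith))
    · rw [Set.indicator_of_notMem hx, zero_add, ← ENNReal.ofReal_mul (by positivity)]
      have hx1 : h x ^ 2 ≤ 1 := by
        have : h x < 1 := not_le.1 hx
        nlinarith [h0 x]
      refine ENNReal.ofReal_le_ofReal ((exp_sub_one_le_mul_exp _).trans ?_)
      rw [mul_right_comm]
      exact mul_le_mul_of_nonneg_right (mul_le_mul_of_nonneg_left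
        (exp_le_exp.2 (mul_le_of_le_one_right hδ.le hx1)) hδ.le) (sq_nonneg _)
  calc ∫⁻ x, ENNReal.ofReal (exp (δ * h x ^ 2) - 1) ∂μ
      ≤ ∫⁻ x, (U.indicator (fun x => ENNReal.ofReal (exp (δ * h x ^ 2))) x
        + ENNReal.ofReal (δ * exp δ) * ENNReal.ofReal (h x ^ 2)) ∂μ := lintegral_mono hpt
    _ = ∫⁻ x in U, ENNReal.ofReal (exp (δ * h x ^ 2)) ∂μ
        + ENNReal.ofReal (δ * exp δ) * ∫⁻ x, ENNReal.ofReal (h x ^ 2) ∂μ := by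
      rw [lintegral_add_left (((hm.pow_const 2).const_mul δ).exp.ennreal_ofReal.indicator hUm),
        lintegral_indicator hUm, lintegral_const_mul' _ _ ENNReal.ofReal_ne_top]
    _ < ∞ := ENNReal.add_lt_top.2 ⟨hexpU, ENNReal.mul_lt_top ENNReal.ofReal_lt_top h2⟩

lemma lintegral_mul_abs_sub_one_le {μ : Measure X} {L g : X → ℝ} {δ : ℝ} (hδ : 0 < δ)
    (hL : Measurable L) (hL0 : ∀ x, 0 ≤ L x) (hg0 : ∀ x, 0 ≤ g x) :
    ∫⁻ x, ENNReal.ofReal (L x * |g x - 1|) ∂μ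
      ≤ ENNReal.ofReal (1 / (2 * δ) + 6 * exp (1 / (4 * δ)))
        * (∫⁻ x, ENNReal.ofReal (exp (δ * L x ^ 2) - 1) ∂μ
          + ∫⁻ x, ENNReal.ofReal (ell (g x)) ∂μ) := by
  rw [← lintegral_add_left (((hL.pow_const 2).const_mul δ).exp.sub_const 1).ennreal_ofReal,
    ← lintegral_const_mul' _ _ ENNReal.ofReal_ne_top]
  refine lintegral_mono fun x => ?_
  have hE : 0 ≤ exp (δ * L x ^ 2) - 1 := by
    linarith [one_le_exp (by positivity : 0 ≤ δ * L x ^ 2)]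
  rw [← ENNReal.ofReal_add hE (ell_nonneg (hg0 x)), ← ENNReal.ofReal_mul (by positivity)]
  exact ENNReal.ofReal_le_ofReal (mul_abs_sub_one_le hδ (hL0 x) (hg0 x))

lemma integral_norm_integral_sub_one_smul_le {μ : Measure S} {ν : Measure Z} [SFinite ν]
    {φ : S × Z → E} {L g : S × Z → ℝ} {K δ Υ : ℝ} (hK : 0 ≤ K) (hδ : 0 < δ)
    (hL : Measurable L) (hL0 : ∀ q, 0 ≤ L q)
    (hexp : ∫⁻ q, ENNReal.ofReal (exp (δ * L q ^ 2) - 1) ∂μ.prod ν < ∞)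
    (hφ : ∀ᵐ s ∂μ, ∀ z, ‖φ (s, z)‖ ≤ K * L (s, z)) (hg : g ∈ entS (μ.prod ν) Υ) :
    ∫ s, ‖∫ z, (g (s, z) - 1) • φ (s, z) ∂ν‖ ∂μ ≤
      (ENNReal.ofReal K * (ENNReal.ofReal (1 / (2 * δ) + 6 * exp (1 / (4 * δ)))
        * (∫⁻ q, ENNReal.ofReal (exp (δ * L q ^ 2) - 1) ∂μ.prod ν + ENNReal.ofReal Υ))).toReal := by
  obtain ⟨hgm, hg0, hgΥ⟩ := hg
  refine integral_norm_integral_le_of_lintegral_le (ν := ν) (Φ := fun q => (g q - 1) • φ q)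
    (F := fun q => ENNReal.ofReal K * ENNReal.ofReal (L q * |g q - 1|)) (by fun_prop) ?_ ?_
    (by finiteness)
  · filter_upwards [hφ] with s hs z
    rw [← ENNReal.ofReal_mul hK, ← ofReal_norm, norm_smul, Real.norm_eq_abs]
    refine ENNReal.ofReal_le_ofReal ?_
    calc |g (s, z) - 1| * ‖φ (s, z)‖ ≤ |g (s, z) - 1| * (K * L (s, z)) := by gcongr; exact hs z
      _ = K * (L (s, z) * |g (s, z) - 1|) := by ring
  · rw [lintegral_const_mul' _ _ ENNReal.ofReal_ne_top]
    exact mul_le_mul_right ((lintegral_mul_abs_sub_one_le hδ hL hL0 hg0).trans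
      (mul_le_mul_right (add_le_add_right hgΥ _) _)) _

end Integrals

theorem statement7_general {V H Z : Type*}
    [NormedAddCommGroup V] [NormedSpace ℝ V]
    [NormedAddCommGroup H] [InnerProductSpace ℝ H]
    [TopologicalSpace Z] [PolishSpace Z] [LocallyCompactSpace Z]
    [MeasurableSpace Z]
    -- the continuous dense embedding `V ⊂ H`
    (i : V →L[ℝ] H)
    (T : ℝ)
    (ν : Measure Z) [IsFiniteMeasureOnCompacts ν]
    (b : ℝ → ℝ) (hb0 : ∀ t, 0 ≤ b t) (hb : IntegrableOn b (Set.Icc 0 T))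
    (B : ℝ → V → (H →L[ℝ] H))
    -- operator-norm bound on `B` (implied by (H.5))
    (hB : ∀ᵐ t ∂(volume.restrict (Set.Icc (0:ℝ) T)), ∀ x : V,
      ‖B t x‖ ≤ Real.sqrt (b t * (1 + ‖i x‖ ^ 2)))
    (γ : ℝ → V → Z → H)
    (Lγ : ℝ × Z → ℝ)
    (hLγ_L2 : ∫⁻ q, ENNReal.ofReal (Lγ q ^ 2) ∂(nuT T ν) < ∞)
    (hLγ_H2 : memHp (nuT T ν) 2 Lγ)
    -- growth bound on `γ` (hypothesis (H.8))
    (hγ : ∀ᵐ t ∂(volume.restrict (Set.Icc (0:ℝ) T)), ∀ (x : V) (z : Z),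
      ‖γ t x z‖ ≤ Lγ (t, z) * (1 + ‖i x‖))
    (Υ : ℝ)
    -- the sequence of maps, uniformly bounded in `H`
    (r : ℕ → ℝ → V)
    (hr_bdd : ∃ M : ℝ, ∀ n, ∀ s ∈ Set.Icc (0:ℝ) T, ‖i (r n s)‖ ≤ M) :
    ∃ C : ℝ, ∀ (f : ℝ → H) (g : ℝ × Z → ℝ),
      MemLp f 2 (volume.restrict (Set.Icc (0:ℝ) T)) →
      (1 / 2) * (∫ s in Set.Icc (0:ℝ) T, ‖f s‖ ^ 2) ≤ Υ →
      g ∈ entS (nuT T ν) Υ →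
      ∀ n : ℕ,
        (∫ s in Set.Icc (0:ℝ) T, ‖∫ z, (g (s, z) - 1) • γ s (r n s) z ∂ν‖)
          + (∫ s in Set.Icc (0:ℝ) T, ‖(B s (r n s)) (f s)‖) ≤ C := by
  obtain ⟨M, hM0, hM⟩ : ∃ M, 0 ≤ M ∧ ∀ n, ∀ s ∈ Set.Icc (0:ℝ) T, ‖i (r n s)‖ ≤ M := by
    obtain ⟨M, hM⟩ := hr_bdd
    exact ⟨max M 0, le_max_right _ _, fun n s hs => (hM n s hs).trans (le_max_left _ _)⟩
  obtain ⟨δ, hδ, hexp⟩ := exists_lintegral_exp_mul_sq_sub_one_lt_top hLγ_H2 hLγ_L2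
  obtain ⟨hLm, hL0, -⟩ := hLγ_H2
  refine ⟨(ENNReal.ofReal (1 + M) * (ENNReal.ofReal (1 / (2 * δ) + 6 * exp (1 / (4 * δ)))
      * (∫⁻ q, ENNReal.ofReal (exp (δ * Lγ q ^ 2) - 1) ∂(nuT T ν) + ENNReal.ofReal Υ))).toReal
      + ((1 + M ^ 2) * (∫ s in Set.Icc 0 T, b s) + 2 * Υ) / 2,
    fun f g hf hfΥ hg n => add_le_add ?_ ?_⟩
  · refine integral_norm_integral_sub_one_smul_le (ν := ν)
      (φ := fun q => γ q.1 (r n q.1) q.2) (by linarith) hδ hLm hL0 hexp ?_ hg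
    filter_upwards [hγ, ae_restrict_mem measurableSet_Icc] with s hs hsT z
    calc ‖γ s (r n s) z‖ ≤ Lγ (s, z) * (1 + M) :=
          (hs _ z).trans (by gcongr; exacts [hL0 _, hM n s hsT])
      _ = (1 + M) * Lγ (s, z) := mul_comm _ _
  · have hBr : ∀ᵐ s ∂(volume.restrict (Set.Icc (0:ℝ) T)),
        ‖B s (r n s)‖ ^ 2 ≤ (1 + M ^ 2) * b s := by
      filter_upwards [hB, ae_restrict_mem measurableSet_Icc] with s hs hsT
      have hiM : ‖i (r n s)‖ ^ 2 ≤ M ^ 2 := pow_le_pow_left₀ (norm_nonneg _) (hM n s hsT) 2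
      calc ‖B s (r n s)‖ ^ 2 ≤ b s * (1 + ‖i (r n s)‖ ^ 2) :=
            (le_sqrt (norm_nonneg _) (by have := hb0 s; positivity)).1 (hs _)
        _ ≤ (1 + M ^ 2) * b s := by nlinarith [hb0 s]
    refine (integral_norm_apply_le (hb.const_mul (1 + M ^ 2)) hf hBr).trans ?_
    rw [integral_const_mul]
    linarith

/-- if `(r_n)` is a sequence of measurable maps with
`sup_n sup_{s∈[0,T]} ‖r_n(s)‖_H < ∞`, then
`sup_{(f,g) ∈ S̄^Υ} sup_n [ ∫₀^T ‖∫_Z γ(s,r_n(s),z)(g(s,z) − 1) ν(dz)‖_H ds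
  + ∫₀^T ‖B(s,r_n(s))f(s)‖_H ds ] < ∞`. -/
theorem statement7 {V H Z : Type*}
    [NormedAddCommGroup V] [NormedSpace ℝ V] [MeasurableSpace V] [BorelSpace V]
    [NormedAddCommGroup H] [InnerProductSpace ℝ H] [CompleteSpace H]
    [TopologicalSpace Z] [PolishSpace Z] [LocallyCompactSpace Z]
    [MeasurableSpace Z] [BorelSpace Z]
    -- the continuous dense embedding `V ⊂ H`
    (i : V →L[ℝ] H) (hi_inj : Function.Injective i) (hi_dense : DenseRange i)
    (T : ℝ) (hT : 0 < T)
    (ν : Measure Z) [IsFiniteMeasureOnCompacts ν]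
    (b : ℝ → ℝ) (hb0 : ∀ t, 0 ≤ b t) (hb : IntegrableOn b (Set.Icc 0 T))
    (B : ℝ → V → (H →L[ℝ] H))
    (hB_meas : StronglyMeasurable (Function.uncurry B))
    -- operator-norm bound on `B` (implied by (H.5))
    (hB : ∀ᵐ t ∂(volume.restrict (Set.Icc (0:ℝ) T)), ∀ x : V,
      ‖B t x‖ ≤ Real.sqrt (b t * (1 + ‖i x‖ ^ 2)))
    (γ : ℝ → V → Z → H)
    (hγ_meas : StronglyMeasurable (fun q : ℝ × V × Z => γ q.1 q.2.1 q.2.2))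
    (Lγ : ℝ × Z → ℝ)
    (hLγ_L2 : ∫⁻ q, ENNReal.ofReal (Lγ q ^ 2) ∂(nuT T ν) < ∞)
    (hLγ_H2 : memHp (nuT T ν) 2 Lγ)
    -- growth bound on `γ` (hypothesis (H.8))
    (hγ : ∀ᵐ t ∂(volume.restrict (Set.Icc (0:ℝ) T)), ∀ (x : V) (z : Z),
      ‖γ t x z‖ ≤ Lγ (t, z) * (1 + ‖i x‖))
    (Υ : ℝ) (hΥ : 0 < Υ)
    -- the sequence of maps, uniformly bounded in `H`
    (r : ℕ → ℝ → V) (hr_meas : ∀ n, Measurable (r n))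
    (hr_bdd : ∃ M : ℝ, ∀ n, ∀ s ∈ Set.Icc (0:ℝ) T, ‖i (r n s)‖ ≤ M) :
    ∃ C : ℝ, ∀ (f : ℝ → H) (g : ℝ × Z → ℝ),
      MemLp f 2 (volume.restrict (Set.Icc (0:ℝ) T)) →
      (1 / 2) * (∫ s in Set.Icc (0:ℝ) T, ‖f s‖ ^ 2) ≤ Υ →
      g ∈ entS (nuT T ν) Υ →
      ∀ n : ℕ,
        (∫ s in Set.Icc (0:ℝ) T, ‖∫ z, (g (s, z) - 1) • γ s (r n s) z ∂ν‖)
          + (∫ s in Set.Icc (0:ℝ) T, ‖(B s (r n s)) (f s)‖) ≤ C :=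
  statement7_general i T ν b hb0 hb B hB γ Lγ hLγ_L2 hLγ_H2 hγ Υ r hr_bdd
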